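/- arXiv:2101.03153 — 4 statements merged into one kernel-verified Lean document; each statement's English description precedes it below -/
import Mathlib

section
/- Let K be an R-submodule of M and let U_max be the supremum, in the lattice of R-submodules of M, of all submodules N of M such that N ⊆ K and D(N) ⊆ N. Then U_max ⊆ K, D(U_max) ⊆ U_max, and for every α ∈ M one has α ∈ U_max if and only if D^[i](α) ∈ K for every i ≥ 0. (This is the abstract algebraic form of Theorem 2.5 of the paper: a section lies in the maximal D-stable submodule contained in K exactly when all of its iterated derivatives lie in K.) -/
/-!
The vectors all of whose iterated derivatives lie in `K` form a submodule: closure under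
scalars follows by induction on the order of the derivative, since the Leibniz rule writes
`D (r • α)` as `δ r • α + r • D α`. This submodule is contained in `K`, is `D`-stable, and
contains every `D`-stable submodule of `K`, so it is the supremum defining `Umax`.
-/

namespace Submodule

variable {R M : Type*} [Semiring R] [AddCommMonoid M] [Module R M]
  {δ : R → R} {D : M →+ M}

def iterateComap (K : Submodule R M) (D : M →+ M) (δ : R → R)
    (hD : ∀ (r : R) (m : M), D (r • m) = δ r • m + r • D m) : Submodule R M where
  carrier := {α | ∀ i : ℕ, D^[i] α ∈ K}
  zero_mem' i := by simp [iterate_map_zero]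
  add_mem' ha hb i := by simpa only [iterate_map_add] using K.add_mem (ha i) (hb i)
  smul_mem' r α hα i := by
    induction i generalizing r α with
    | zero => exact K.smul_mem r (hα 0)
    | succ i ih =>
      rw [Function.iterate_succ_apply, hD, iterate_map_add]
      exact K.add_mem (ih (δ r) α hα) (ih r (D α) fun j => hα (j + 1))

variable {K : Submodule R M} {hD : ∀ (r : R) (m : M), D (r • m) = δ r • m + r • D m}

@[simp]
theorem mem_iterateComap {α : M} : α ∈ K.iterateComap D δ hD ↔ ∀ i : ℕ, D^[i] α ∈ K :=
  Iff.rfl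

theorem iterateComap_le : K.iterateComap D δ hD ≤ K :=
  fun _ hα => hα 0

theorem map_mem_iterateComap {α : M} (hα : α ∈ K.iterateComap D δ hD) :
    D α ∈ K.iterateComap D δ hD :=
  fun i => hα (i + 1)

theorem le_iterateComap {N : Submodule R M} (hNK : N ≤ K) (hND : ∀ x ∈ N, D x ∈ N) :
    N ≤ K.iterateComap D δ hD := by
  intro x hx i
  apply hNK
  induction i with
  | zero => exact hx
  | succ i ih => exact Function.iterate_succ_apply' D i x ▸ hND _ ih

theorem isGreatest_iterateComap :
    IsGreatest {N : Submodule R M | N ≤ K ∧ ∀ x ∈ N, D x ∈ N} (K.iterateComap D δ hD) :=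
  ⟨⟨iterateComap_le, fun _ => map_mem_iterateComap⟩,
    fun _ ⟨hNK, hND⟩ => le_iterateComap hNK hND⟩

end Submodule

theorem flat_submodule_eq_iterated_kernel_general
    {R M : Type*} [CommRing R] [AddCommGroup M] [Module R M]
    (δ : R → R)
    (D : M → M)
    (hDadd : ∀ m n : M, D (m + n) = D m + D n)
    (hDsmul : ∀ (r : R) (m : M), D (r • m) = δ r • m + r • D m)
    (K : Submodule R M)
    (Umax : Submodule R M)
    (hUmax : Umax = sSup {N : Submodule R M | N ≤ K ∧ ∀ x ∈ N, D x ∈ N}) :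
    Umax ≤ K ∧ (∀ x ∈ Umax, D x ∈ Umax) ∧
      (∀ α : M, α ∈ Umax ↔ ∀ i : ℕ, D^[i] α ∈ K) := by
  let D' : M →+ M := AddMonoidHom.mk' D hDadd
  obtain rfl : Umax = K.iterateComap D' δ hDsmul :=
    hUmax.trans (Submodule.isGreatest_iterateComap (D := D') (hD := hDsmul)).csSup_eq
  exact ⟨Submodule.iterateComap_le, fun _ => Submodule.map_mem_iterateComap,
    fun _ => Submodule.mem_iterateComap⟩

/-- abstract form of Theorem 2.5.
`R` is a commutative ring, `δ : R → R` a derivation, `M` an `R`-module and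
`D : M → M` an additive map satisfying the Leibniz rule with respect to `δ`.
`K` is a submodule of `M` and `Umax` is the supremum of all submodules `N ⊆ K`
with `D(N) ⊆ N`.  Then `Umax ⊆ K`, `D(Umax) ⊆ Umax`, and `α ∈ Umax` iff all
iterated derivatives `D^[i] α` lie in `K`. -/
theorem flat_submodule_eq_iterated_kernel
    {R M : Type*} [CommRing R] [AddCommGroup M] [Module R M]
    (δ : R → R)
    (hδadd : ∀ r s : R, δ (r + s) = δ r + δ s)
    (hδmul : ∀ r s : R, δ (r * s) = δ r * s + r * δ s)
    (D : M → M)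
    (hDadd : ∀ m n : M, D (m + n) = D m + D n)
    (hDsmul : ∀ (r : R) (m : M), D (r • m) = δ r • m + r • D m)
    (K : Submodule R M)
    (Umax : Submodule R M)
    (hUmax : Umax = sSup {N : Submodule R M | N ≤ K ∧ ∀ x ∈ N, D x ∈ N}) :
    Umax ≤ K ∧ (∀ x ∈ Umax, D x ∈ Umax) ∧
      (∀ α : M, α ∈ Umax ↔ ∀ i : ℕ, D^[i] α ∈ K) :=
  flat_submodule_eq_iterated_kernel_general δ D hDadd hDsmul K Umax hUmax
end

section
/- Let η : M → M' be an R-linear map, set K := {m ∈ M : η(m) = 0}, and let U_max be the supremum, in the lattice of R-submodules of M, of all submodules N of M such that N ⊆ K and D(N) ⊆ N. Then for every α ∈ M one has α ∈ U_max if and only if η^{(k)}(α) = 0 for all k ≥ 1. (This is the abstract algebraic form of Theorem 2.8 of the paper, characterizing the maximal D-stable submodule of the kernel of the Higgs field by the vanishing of all the operators η^{(k)}.) -/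
/-!
Unwinding the recursion, `η^{(k)}` vanishes at `α` for all `k ≥ 1` exactly when `η` vanishes
on the whole orbit `α, Dα, D²α, …`: indeed `η^{(k+1)}(α) = D'(η^{(k)}(α)) − η^{(k)}(Dα)`, so
the vanishing of all `η^{(k)}` at `α` passes to `Dα`. On the other hand the supremum of the
`D`-stable submodules inside `ker η` is itself `D`-stable, and the Leibniz rule makes the span
of a `D`-orbit `D`-stable; so `U_max` consists precisely of the `α` whose orbit lies in `ker η`.
-/

open Function Set

theorem mapsTo_range_iterate {α : Type*} (f : α → α) (a : α) :
    MapsTo f (range fun i => f^[i] a) (range fun i => f^[i] a) := by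
  rintro _ ⟨i, rfl⟩
  exact ⟨i + 1, iterate_succ_apply' f i a⟩

section StableSubmodule

variable {R M : Type*} [Semiring R] [AddCommGroup M] [Module R M] {D : M → M}

theorem map_zero_of_map_add (hDadd : ∀ m n : M, D (m + n) = D m + D n) : D 0 = 0 := by
  simpa using hDadd 0 0

theorem mapsTo_sSup_of_forall_mapsTo (hDadd : ∀ m n : M, D (m + n) = D m + D n)
    {S : Set (Submodule R M)} (hS : ∀ N ∈ S, MapsTo D N N) :
    MapsTo D ↑(sSup S) ↑(sSup S) := by
  intro x hx
  rw [SetLike.mem_coe, sSup_eq_iSup'] at hx ⊢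
  refine Submodule.iSup_induction _ (motive := fun x => D x ∈ ⨆ N : S, (N : Submodule R M)) hx
    (fun N x hx => Submodule.mem_iSup_of_mem N (hS N N.2 hx)) ?_ fun x y hx hy => ?_
  · rw [map_zero_of_map_add hDadd]; exact zero_mem _
  · rw [hDadd]; exact add_mem hx hy

theorem mapsTo_span_of_leibniz {δ : R → R} (hDadd : ∀ m n : M, D (m + n) = D m + D n)
    (hDsmul : ∀ (r : R) (m : M), D (r • m) = δ r • m + r • D m)
    {s : Set M} (hs : MapsTo D s (Submodule.span R s)) :
    MapsTo D ↑(Submodule.span R s) ↑(Submodule.span R s) := by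
  intro x hx
  induction hx using Submodule.span_induction with
  | mem x hx => exact hs hx
  | zero => rw [SetLike.mem_coe, map_zero_of_map_add hDadd]; exact zero_mem _
  | add x y _ _ hx hy => rw [SetLike.mem_coe, hDadd]; exact add_mem hx hy
  | smul r x hx ihx =>
    rw [SetLike.mem_coe, hDsmul]
    exact add_mem (Submodule.smul_mem _ _ hx) (Submodule.smul_mem _ _ ihx)

theorem mem_sSup_stable_le_iff {δ : R → R} (hDadd : ∀ m n : M, D (m + n) = D m + D n)
    (hDsmul : ∀ (r : R) (m : M), D (r • m) = δ r • m + r • D m) (K : Submodule R M) (α : M) :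
    α ∈ sSup {N : Submodule R M | N ≤ K ∧ ∀ x ∈ N, D x ∈ N} ↔ ∀ i, D^[i] α ∈ K := by
  set S := {N : Submodule R M | N ≤ K ∧ ∀ x ∈ N, D x ∈ N}
  constructor
  · intro hα i
    have hSup : MapsTo D ↑(sSup S) ↑(sSup S) :=
      mapsTo_sSup_of_forall_mapsTo hDadd fun N hN x hx => hN.2 x hx
    exact (sSup_le fun N hN => hN.1 : sSup S ≤ K) (hSup.iterate i hα)
  · intro hα
    set orbit := range fun i => D^[i] α
    have hspan : Submodule.span R orbit ∈ S :=
      ⟨Submodule.span_le.mpr (range_subset_iff.mpr hα), fun x hx =>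
        mapsTo_span_of_leibniz hDadd hDsmul
          ((mapsTo_range_iterate D α).mono_right Submodule.subset_span) hx⟩
    exact le_sSup hspan (Submodule.subset_span ⟨0, rfl⟩)

end StableSubmodule

section Iterated

variable {M M' : Type*} [AddGroup M'] {D : M → M} {D' : M' → M'} {η : M → M'}
  {eta : ℕ → M → M'}

theorem eta_eq_zero_of_forall_iterate (hD'0 : D' 0 = 0) (heta1 : ∀ m, eta 1 m = η m)
    (hetarec : ∀ k, 1 ≤ k → ∀ m, eta (k + 1) m = D' (eta k m) - eta k (D m))
    {k : ℕ} (hk : 1 ≤ k) : ∀ β, (∀ i, η (D^[i] β) = 0) → eta k β = 0 := by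
  induction k, hk using Nat.le_induction with
  | base => intro β hβ; rw [heta1]; exact hβ 0
  | succ k hk ih =>
    intro β hβ
    have hDβ : ∀ i, η (D^[i] (D β)) = 0 := fun i => by
      rw [← iterate_succ_apply]; exact hβ (i + 1)
    rw [hetarec k hk, ih β hβ, ih (D β) hDβ, hD'0, sub_zero]

theorem forall_eta_eq_zero_map (hD'0 : D' 0 = 0)
    (hetarec : ∀ k, 1 ≤ k → ∀ m, eta (k + 1) m = D' (eta k m) - eta k (D m))
    {β : M} (hβ : ∀ k, 1 ≤ k → eta k β = 0) : ∀ k, 1 ≤ k → eta k (D β) = 0 := by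
  intro k hk
  have h := hetarec k hk β
  rwa [hβ k hk, hβ (k + 1) (by omega), hD'0, zero_sub, eq_comm, neg_eq_zero] at h

theorem forall_eta_eq_zero_iff (hD'0 : D' 0 = 0) (heta1 : ∀ m, eta 1 m = η m)
    (hetarec : ∀ k, 1 ≤ k → ∀ m, eta (k + 1) m = D' (eta k m) - eta k (D m)) (α : M) :
    (∀ k, 1 ≤ k → eta k α = 0) ↔ ∀ i, η (D^[i] α) = 0 := by
  refine ⟨fun hα i => ?_, fun hα k hk => eta_eq_zero_of_forall_iterate hD'0 heta1 hetarec hk α hα⟩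
  induction i generalizing α with
  | zero => rw [← heta1]; exact hα 1 le_rfl
  | succ i ih => rw [iterate_succ_apply]; exact ih _ (forall_eta_eq_zero_map hD'0 hetarec hα)

end Iterated

theorem mem_flat_submodule_iff_etas_vanish_general
    {R M M' : Type*} [CommRing R] [AddCommGroup M] [Module R M]
    [AddCommGroup M'] [Module R M']
    (δ : R → R)
    (D : M → M)
    (hDadd : ∀ m n : M, D (m + n) = D m + D n)
    (hDsmul : ∀ (r : R) (m : M), D (r • m) = δ r • m + r • D m)
    (D' : M' → M')
    (hD'add : ∀ m n : M', D' (m + n) = D' m + D' n)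
    (η : M →ₗ[R] M')
    (eta : ℕ → M → M')
    (heta1 : ∀ m : M, eta 1 m = η m)
    (hetarec : ∀ k : ℕ, 1 ≤ k → ∀ m : M,
      eta (k + 1) m = D' (eta k m) - eta k (D m))
    (Umax : Submodule R M)
    (hUmax : Umax =
      sSup {N : Submodule R M | N ≤ LinearMap.ker η ∧ ∀ x ∈ N, D x ∈ N}) :
    ∀ α : M, α ∈ Umax ↔ ∀ k : ℕ, 1 ≤ k → eta k α = 0 := by
  intro α
  rw [hUmax, mem_sSup_stable_le_iff hDadd hDsmul,
    forall_eta_eq_zero_iff (map_zero_of_map_add hD'add) heta1 hetarec]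
  simp only [LinearMap.mem_ker]

/-- abstract form of Theorem 2.8.
`η : M →ₗ[R] M'` is an `R`-linear map, `K = ker η`, and `Umax` is the supremum
of all submodules `N ⊆ K` with `D(N) ⊆ N`.  The maps `η^{(k)}` (here `eta k`
for `k ≥ 1`) are defined recursively by `η^{(1)} = η` and
`η^{(k+1)} = D' ∘ η^{(k)} − η^{(k)} ∘ D`.  Then `α ∈ Umax` iff `η^{(k)}(α) = 0`
for all `k ≥ 1`. -/
theorem mem_flat_submodule_iff_etas_vanish
    {R M M' : Type*} [CommRing R] [AddCommGroup M] [Module R M]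
    [AddCommGroup M'] [Module R M']
    (δ : R → R)
    (hδadd : ∀ r s : R, δ (r + s) = δ r + δ s)
    (hδmul : ∀ r s : R, δ (r * s) = δ r * s + r * δ s)
    (D : M → M)
    (hDadd : ∀ m n : M, D (m + n) = D m + D n)
    (hDsmul : ∀ (r : R) (m : M), D (r • m) = δ r • m + r • D m)
    (D' : M' → M')
    (hD'add : ∀ m n : M', D' (m + n) = D' m + D' n)
    (hD'smul : ∀ (r : R) (m : M'), D' (r • m) = δ r • m + r • D' m)
    (η : M →ₗ[R] M')
    (eta : ℕ → M → M')
    (heta1 : ∀ m : M, eta 1 m = η m)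
    (hetarec : ∀ k : ℕ, 1 ≤ k → ∀ m : M,
      eta (k + 1) m = D' (eta k m) - eta k (D m))
    (Umax : Submodule R M)
    (hUmax : Umax =
      sSup {N : Submodule R M | N ≤ LinearMap.ker η ∧ ∀ x ∈ N, D x ∈ N}) :
    ∀ α : M, α ∈ Umax ↔ ∀ k : ℕ, 1 ≤ k → eta k α = 0 :=
  mem_flat_submodule_iff_etas_vanish_general δ D hDadd hDsmul D' hD'add η eta heta1 hetarec Umax
    hUmax
end

section
/- For every α ∈ M and every integer n ≥ 1, the following three conditions are equivalent: (i) η(D^[j](α)) = 0 for all j with 0 ≤ j ≤ n−1; (ii) η^{(k)}(α) = 0 for all k with 1 ≤ k ≤ n; (iii) η^{(i)}(D^[j](α)) = 0 for all i ≥ 1 and j ≥ 0 with i + j ≤ n. (This is the formal core of the proof of Theorem 2.8 of the paper.) -/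
/-!
The recurrence `η^{(i+1)} x = D' (η^{(i)} x) - η^{(i)} (D x)` relates the values at `(i + 1, j)`,
`(i, j)` and `(i, j + 1)` of `(i, j) ↦ η^{(i)} (D^[j] α)`; since `D' 0 = 0`, any two of them
vanishing forces the third to vanish. Hence vanishing on the triangle `i ≥ 1, i + j ≤ n` spreads
from its edge `i = 1` (condition (i)) by induction on `i`, and from its edge `j = 0`
(condition (ii)) by induction on `j`.
-/

section

variable {M M' : Type*} [AddGroup M'] {D : M → M} {D' : M' → M'} {eta : ℕ → M → M'}

def EtaRecursion (D : M → M) (D' : M' → M') (eta : ℕ → M → M') : Prop :=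
  ∀ k : ℕ, 1 ≤ k → ∀ m : M, eta (k + 1) m = D' (eta k m) - eta k (D m)

namespace EtaRecursion

theorem eta_succ_eq_zero (h : EtaRecursion D D' eta) (hD'0 : D' 0 = 0) {i : ℕ} (hi : 1 ≤ i)
    {x : M} (hx : eta i x = 0) (hDx : eta i (D x) = 0) : eta (i + 1) x = 0 := by
  rw [h i hi, hx, hDx, hD'0, sub_zero]

theorem eta_map_eq_zero (h : EtaRecursion D D' eta) (hD'0 : D' 0 = 0) {i : ℕ} (hi : 1 ≤ i)
    {x : M} (hx : eta i x = 0) (hsucc : eta (i + 1) x = 0) : eta i (D x) = 0 := by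
  rwa [h i hi, hx, hD'0, zero_sub, neg_eq_zero] at hsucc

theorem eta_iterate_eq_zero_of_eta_one (h : EtaRecursion D D' eta) (hD'0 : D' 0 = 0)
    {α : M} {n : ℕ} (hα : ∀ j : ℕ, j < n → eta 1 (D^[j] α) = 0) :
    ∀ i j : ℕ, 1 ≤ i → i + j ≤ n → eta i (D^[j] α) = 0 := by
  intro i
  induction i with
  | zero => intro j hi; omega
  | succ i ih =>
    intro j _ hij
    rcases Nat.eq_zero_or_pos i with rfl | hi
    · exact hα j (by omega)
    · refine h.eta_succ_eq_zero hD'0 hi (ih j hi (by omega)) ?_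
      rw [← Function.iterate_succ_apply' D j α]
      exact ih (j + 1) hi (by omega)

theorem eta_iterate_eq_zero_of_eta (h : EtaRecursion D D' eta) (hD'0 : D' 0 = 0)
    {α : M} {n : ℕ} (hα : ∀ k : ℕ, 1 ≤ k → k ≤ n → eta k α = 0) :
    ∀ i j : ℕ, 1 ≤ i → i + j ≤ n → eta i (D^[j] α) = 0 := by
  intro i j
  induction j generalizing i with
  | zero => exact hα i
  | succ j ih =>
    intro hi hij
    rw [Function.iterate_succ_apply' D j α]
    exact h.eta_map_eq_zero hD'0 hi (ih i hi (by omega)) (ih (i + 1) (by omega) (by omega))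

end EtaRecursion

end

theorem etas_vanish_tfae_general
    {M M' : Type*} [AddCommGroup M] [AddCommGroup M']
    (D : M → M)
    (D' : M' → M') (hD'add : ∀ m n : M', D' (m + n) = D' m + D' n)
    (η : M → M')
    (eta : ℕ → M → M')
    (heta1 : ∀ m : M, eta 1 m = η m)
    (hetarec : ∀ k : ℕ, 1 ≤ k → ∀ m : M,
      eta (k + 1) m = D' (eta k m) - eta k (D m))
    (α : M) (n : ℕ) :
    ((∀ j : ℕ, j < n → η (D^[j] α) = 0) ↔
        (∀ k : ℕ, 1 ≤ k → k ≤ n → eta k α = 0)) ∧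
    ((∀ k : ℕ, 1 ≤ k → k ≤ n → eta k α = 0) ↔
        (∀ i j : ℕ, 1 ≤ i → i + j ≤ n → eta i (D^[j] α) = 0)) := by
  have hrec : EtaRecursion D D' eta := hetarec
  have hD'0 : D' 0 = 0 := (AddMonoidHom.mk' D' hD'add).map_zero
  simp only [← heta1]
  have iii_of_i := hrec.eta_iterate_eq_zero_of_eta_one hD'0 (α := α) (n := n)
  have iii_of_ii := hrec.eta_iterate_eq_zero_of_eta hD'0 (α := α) (n := n)
  have i_of_iii (h : ∀ i j : ℕ, 1 ≤ i → i + j ≤ n → eta i (D^[j] α) = 0) :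
      ∀ j : ℕ, j < n → eta 1 (D^[j] α) = 0 := fun j _ => h 1 j le_rfl (by omega)
  have ii_of_iii (h : ∀ i j : ℕ, 1 ≤ i → i + j ≤ n → eta i (D^[j] α) = 0) :
      ∀ k : ℕ, 1 ≤ k → k ≤ n → eta k α = 0 := fun k hk _ => h k 0 hk (by omega)
  exact ⟨⟨fun h => ii_of_iii (iii_of_i h), fun h => i_of_iii (iii_of_ii h)⟩,
    ⟨iii_of_ii, ii_of_iii⟩⟩

/-- formal core of the proof of Theorem 2.8.
`M`, `M'` are additive commutative groups, `D : M → M`, `D' : M' → M'` and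
`η : M → M'` are additive maps, and `eta k` (for `k ≥ 1`) are the maps
`η^{(k)}` defined by `η^{(1)} = η`, `η^{(k+1)} = D' ∘ η^{(k)} − η^{(k)} ∘ D`.
For every `α ∈ M` and `n ≥ 1` the three vanishing conditions (i), (ii), (iii)
are equivalent. -/
theorem etas_vanish_tfae
    {M M' : Type*} [AddCommGroup M] [AddCommGroup M']
    (D : M → M) (hDadd : ∀ m n : M, D (m + n) = D m + D n)
    (D' : M' → M') (hD'add : ∀ m n : M', D' (m + n) = D' m + D' n)
    (η : M → M') (hηadd : ∀ m n : M, η (m + n) = η m + η n)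
    (eta : ℕ → M → M')
    (heta1 : ∀ m : M, eta 1 m = η m)
    (hetarec : ∀ k : ℕ, 1 ≤ k → ∀ m : M,
      eta (k + 1) m = D' (eta k m) - eta k (D m))
    (α : M) (n : ℕ) (hn : 1 ≤ n) :
    ((∀ j : ℕ, j < n → η (D^[j] α) = 0) ↔
        (∀ k : ℕ, 1 ≤ k → k ≤ n → eta k α = 0)) ∧
    ((∀ k : ℕ, 1 ≤ k → k ≤ n → eta k α = 0) ↔
        (∀ i j : ℕ, 1 ≤ i → i + j ≤ n → eta i (D^[j] α) = 0)) :=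
  etas_vanish_tfae_general D D' hD'add η eta heta1 hetarec α n
end

section
/- Assume: (i) Dx(a) = g·Dx'(a) and Dt(a) = h·Dx'(a) + Dt'(a) for all a ∈ A; (ii) Dx̄(a) = ḡ·Dx̄'(a) for all a ∈ A; (iii) Dx̄(g) = 0 and Dx̄(h) = 0; (iv) Dx(ḡ) = 0 and Dt(ḡ) = 0; (v) Dt(g) = Dx(h). Set Z' := Z·g + h. Then Z'·Dx'(Dx̄'(Z')) + Dt'(Dx̄'(Z')) − Dx'(Z')·Dx̄'(Z') = g·ḡ⁻¹·( Z·Dx(Dx̄(Z)) + Dt(Dx̄(Z)) − Dx(Z)·Dx̄(Z) ). (This is the algebraic identity at the core of Lemma 3.6 of the paper, proving that the expression defining the second-order Kodaira–Spencer form μ is independent of the choice of local coordinates.) -/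
/-!
Both charts see the same vector field: `V := Z • Dx + Dt = Z' • Dx' + Dt'`, while
`Dx̄' = ḡ⁻¹ • Dx̄` and `Dx̄ Z' = g · Dx̄ Z` by holomorphy of `g` and `h`. Since `V` kills `ḡ`,
the left side becomes `ḡ⁻¹ · (V(g · Dx̄ Z) - Dx Z' · Dx̄ Z)`, and the compatibility
`Dt g = Dx h` says exactly that `Dx Z' = g · Dx Z + V g`, so the two `V g` terms cancel.
-/

/-- A derivation of a commutative ring: an additive map satisfying the
Leibniz rule. -/
def IsDerivationOn {A : Type*} [CommRing A] (L : A → A) : Prop :=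
  (∀ a b : A, L (a + b) = L a + L b) ∧ (∀ a b : A, L (a * b) = L a * b + a * L b)

namespace IsDerivationOn

variable {A : Type*} [CommRing A] {L L₁ L₂ : A → A}

theorem map_one (hL : IsDerivationOn L) : L 1 = 0 := by
  have h := hL.2 1 1
  simp only [mul_one, one_mul] at h
  exact left_eq_add.mp h

theorem map_invOf_eq_zero (hL : IsDerivationOn L) {a : A} [Invertible a] (ha : L a = 0) :
    L (⅟a) = 0 := by
  have h := hL.2 a (⅟a)
  rw [mul_invOf_self, hL.map_one, ha, zero_mul, zero_add] at h
  rw [← invOf_mul_cancel_left a (L (⅟a)), ← h, mul_zero]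

theorem mul_add (h₁ : IsDerivationOn L₁) (h₂ : IsDerivationOn L₂) (c : A) :
    IsDerivationOn (fun a => c * L₁ a + L₂ a) := by
  refine ⟨fun a b => ?_, fun a b => ?_⟩
  · simp only [h₁.1, h₂.1]; ring
  · simp only [h₁.2, h₂.2]; ring

end IsDerivationOn

theorem mu_coordinate_invariance_general
    {A : Type*} [CommRing A]
    (Dx Dt Dxb Dx' Dt' Dxb' : A → A)
    (hDx : IsDerivationOn Dx) (hDt : IsDerivationOn Dt)
    (hDxb : IsDerivationOn Dxb)
    (g gb h Z : A) [Invertible gb]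
    (hchx : ∀ a : A, Dx a = g * Dx' a)
    (hcht : ∀ a : A, Dt a = h * Dx' a + Dt' a)
    (hchxb : ∀ a : A, Dxb a = gb * Dxb' a)
    (hgb_hol : Dxb g = 0) (hhb_hol : Dxb h = 0)
    (hgb_x : Dx gb = 0) (hgb_t : Dt gb = 0)
    (hcompat : Dt g = Dx h)
    (Z' : A) (hZ' : Z' = Z * g + h) :
    Z' * Dx' (Dxb' Z') + Dt' (Dxb' Z') - Dx' Z' * Dxb' Z'
      = g * ⅟gb * (Z * Dx (Dxb Z) + Dt (Dxb Z) - Dx Z * Dxb Z) := by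
  set V : A → A := fun a => Z * Dx a + Dt a with hV_def
  have hV : IsDerivationOn V := hDx.mul_add hDt Z
  have hV_eq : ∀ a, Z' * Dx' a + Dt' a = V a := fun a => by
    simp only [hV_def, hchx, hcht, hZ']; ring
  have hDxb'_eq : ∀ a, Dxb' a = ⅟gb * Dxb a := fun a => by
    rw [hchxb, invOf_mul_cancel_left]
  have hDxbZ' : Dxb Z' = g * Dxb Z := by
    rw [hZ', hDxb.1, hDxb.2, hgb_hol, hhb_hol]; ring
  have hDxZ' : Dx Z' = Dx Z * g + Z * Dx g + Dx h := by
    rw [hZ', hDx.1, hDx.2]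
  have hV_gb : V (⅟gb) = 0 :=
    hV.map_invOf_eq_zero (by simp only [hV_def, hgb_x, hgb_t, mul_zero, add_zero])
  calc Z' * Dx' (Dxb' Z') + Dt' (Dxb' Z') - Dx' Z' * Dxb' Z'
      = V (⅟gb * (g * Dxb Z)) - ⅟gb * (g * Dx' Z') * Dxb Z := by
        rw [hV_eq, hDxb'_eq, hDxbZ']; ring
    _ = g * ⅟gb * (V (Dxb Z) - Dx Z * Dxb Z) := by
        rw [← hchx, hDxZ', hV.2, hV.2, hV_gb]
        simp only [hV_def, hcompat]
        ring

/-- algebraic core of Lemma 3.6: coordinate invariance of the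
expression defining the second-order Kodaira–Spencer form `μ`. -/
theorem mu_coordinate_invariance
    {A : Type*} [CommRing A]
    (Dx Dt Dxb Dx' Dt' Dxb' : A → A)
    (hDx : IsDerivationOn Dx) (hDt : IsDerivationOn Dt)
    (hDxb : IsDerivationOn Dxb) (hDx' : IsDerivationOn Dx')
    (hDt' : IsDerivationOn Dt') (hDxb' : IsDerivationOn Dxb')
    (g gb h Z : A) [Invertible g] [Invertible gb]
    (hchx : ∀ a : A, Dx a = g * Dx' a)
    (hcht : ∀ a : A, Dt a = h * Dx' a + Dt' a)
    (hchxb : ∀ a : A, Dxb a = gb * Dxb' a)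
    (hgb_hol : Dxb g = 0) (hhb_hol : Dxb h = 0)
    (hgb_x : Dx gb = 0) (hgb_t : Dt gb = 0)
    (hcompat : Dt g = Dx h)
    (Z' : A) (hZ' : Z' = Z * g + h) :
    Z' * Dx' (Dxb' Z') + Dt' (Dxb' Z') - Dx' Z' * Dxb' Z'
      = g * ⅟gb * (Z * Dx (Dxb Z) + Dt (Dxb Z) - Dx Z * Dxb Z) :=
  mu_coordinate_invariance_general Dx Dt Dxb Dx' Dt' Dxb' hDx hDt hDxb g gb h Z hchx hcht hchxb
    hgb_hol hhb_hol hgb_x hgb_t hcompat Z' hZ'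
end
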